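/- arXiv:2603.13854 — 2 statements merged into one kernel-verified Lean document; each statement's English description precedes it below -/
import Mathlib

section
/- For all finsets S, U, T, V of ι, if S ∩ V ≠ ∅ and T ∩ U ≠ ∅ then (m_S * F_U) * (m_T * F_V) = m_{S ∪ T} in R (multiplication rules 12 and 15 of the Multiplication Rewriting Principle). -/
variable {ι : Type*} [DecidableEq ι]

/-- Monomial semantics: `m S` evaluates an assignment `a` to `∏ i ∈ S, a i`. -/
def m (S : Finset ι) : (ι → ZMod 2) → ZMod 2 :=
  fun a => ∏ i ∈ S, a i

/-- Power-set sum semantics: `F U` evaluates `a` to the sum over nonempty subsets `A ⊆ U`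
of `∏ i ∈ A, a i`. -/
def F (U : Finset ι) : (ι → ZMod 2) → ZMod 2 :=
  fun a => ∑ A ∈ U.powerset.erase ∅, ∏ i ∈ A, a i

/-!
Every Boolean function is idempotent, so `m (S ∪ T) = m S * m T`, and expanding the product
gives `F U = 1 - ∏ i ∈ U, (1 - x i)` with `x i = Function.eval i` (signs do not matter mod 2).
For `j ∈ S ∩ V` the monomial `m S` contains `x j` while the product for `F V` contains
`1 - x j`, and `x j * (1 - x j) = 0`; hence `m S * F V = m S`, likewise `m T * F U = m T`.
-/

open Finset

section IdempotentProducts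

variable {α M R : Type*} [CommMonoid M] [CommRing R] {s t : Finset α}

theorem Finset.isIdempotentElem_prod {f : α → M} (hf : ∀ i ∈ s, IsIdempotentElem (f i)) :
    IsIdempotentElem (∏ i ∈ s, f i) :=
  prod_induction f IsIdempotentElem (fun _ _ ha hb => ha.mul hb) .one hf

theorem Finset.prod_mul_prod_of_subset_of_isIdempotentElem [DecidableEq α] {f : α → M}
    (hts : t ⊆ s) (hf : ∀ i ∈ t, IsIdempotentElem (f i)) :
    (∏ i ∈ s, f i) * ∏ i ∈ t, f i = ∏ i ∈ s, f i := by
  rw [← prod_sdiff hts, mul_assoc, (isIdempotentElem_prod hf).eq]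

theorem Finset.prod_union_of_isIdempotentElem [DecidableEq α] {f : α → M}
    (hf : ∀ i ∈ s ∩ t, IsIdempotentElem (f i)) :
    ∏ i ∈ s ∪ t, f i = (∏ i ∈ s, f i) * ∏ i ∈ t, f i := by
  rw [← prod_union_inter, prod_mul_prod_of_subset_of_isIdempotentElem inter_subset_union hf]

theorem Finset.prod_mul_prod_one_sub_eq_zero [DecidableEq α] {f : α → R} {j : α}
    (hs : j ∈ s) (ht : j ∈ t) (hf : IsIdempotentElem (f j)) :
    (∏ i ∈ s, f i) * ∏ i ∈ t, (1 - f i) = 0 := by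
  rw [← mul_prod_erase s f hs, ← mul_prod_erase t _ ht, mul_mul_mul_comm, hf.mul_one_sub_self,
    zero_mul]

end IdempotentProducts

theorem ZMod.isIdempotentElem_two (x : ZMod 2) : IsIdempotentElem x := by
  fin_cases x <;> rfl

theorem isIdempotentElem_eval {α : Type*} (i : α) :
    IsIdempotentElem (Function.eval i : (α → ZMod 2) → ZMod 2) :=
  funext fun a => ZMod.isIdempotentElem_two (a i)

theorem m_eq_prod_eval {α : Type*} (S : Finset α) : m S = ∏ i ∈ S, Function.eval i := by
  funext a
  simp only [m, prod_apply, Function.eval]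

theorem F_eq_one_sub_prod (U : Finset ι) : F U = 1 - ∏ i ∈ U, (1 - Function.eval i) := by
  funext a
  have hprod : ∏ i ∈ U, (1 - a i) = 1 + F U a := by
    simp only [sub_eq_add_neg, ZMod.neg_eq_self_mod_two]
    rw [prod_one_add, ← add_sum_erase _ _ (empty_mem_powerset U), prod_empty, F]
  simp only [Pi.sub_apply, Pi.one_apply, prod_apply, Function.eval, hprod, sub_add_cancel_left,
    ZMod.neg_eq_self_mod_two]

theorem m_mul_F_of_mem {S V : Finset ι} {j : ι} (hS : j ∈ S) (hV : j ∈ V) :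
    m S * F V = m S := by
  rw [F_eq_one_sub_prod, mul_sub, mul_one, m_eq_prod_eval,
    prod_mul_prod_one_sub_eq_zero hS hV (isIdempotentElem_eval j), sub_zero]

theorem m_union (S T : Finset ι) : m (S ∪ T) = m S * m T := by
  simp only [m_eq_prod_eval]
  exact prod_union_of_isIdempotentElem fun i _ => isIdempotentElem_eval i

theorem stmt6 (S U T V : Finset ι) (h1 : S ∩ V ≠ ∅) (h2 : T ∩ U ≠ ∅) :
    (m S * F U) * (m T * F V) = m (S ∪ T) := by
  obtain ⟨j, hj⟩ := nonempty_iff_ne_empty.2 h1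
  obtain ⟨k, hk⟩ := nonempty_iff_ne_empty.2 h2
  rw [mem_inter] at hj hk
  calc (m S * F U) * (m T * F V) = (m S * F V) * (m T * F U) := by ring
    _ = m S * m T := by rw [m_mul_F_of_mem hj.1 hj.2, m_mul_F_of_mem hk.1 hk.2]
    _ = m (S ∪ T) := (m_union S T).symm
end

section
/- Let K be a nonempty finset of ι. Then for every assignment a : ι → ZMod 2, F_K(a) = 1 if and only if there exists i ∈ K with a i = 1. (Case 1 of the canonicity of disjunctive formulae: F_K is the algebraic normal form of the clause that is the disjunction of the positive literals x_i for i ∈ K.) -/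
variable {ι : Type*} [DecidableEq ι]

/-! Expanding `∏ i ∈ U, (a i + 1)` over the subsets of `U` gives `F U a + 1`, the indicator of
"all `a i = 0`", i.e. of the negated clause. A product over `ZMod 2` vanishes exactly when one
factor `a i + 1` does, i.e. when some `a i = 1`. -/

theorem Finset.sum_powerset_erase_empty_prod {R : Type*} [CommRing R] (s : Finset ι)
    (f : ι → R) : ∑ t ∈ s.powerset.erase ∅, ∏ i ∈ t, f i = ∏ i ∈ s, (f i + 1) - 1 := by
  rw [Finset.prod_add_one, ← Finset.add_sum_erase _ _ (Finset.empty_mem_powerset s),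
    Finset.prod_empty, add_sub_cancel_left]

theorem F_add_one (U : Finset ι) (a : ι → ZMod 2) : F U a + 1 = ∏ i ∈ U, (a i + 1) := by
  rw [F, Finset.sum_powerset_erase_empty_prod, sub_add_cancel]

theorem Finset.prod_add_one_eq_zero_iff_of_charTwo {κ R : Type*} [CommRing R] [NoZeroDivisors R]
    [Nontrivial R] [CharP R 2] (s : Finset κ) (f : κ → R) :
    ∏ i ∈ s, (f i + 1) = 0 ↔ ∃ i ∈ s, f i = 1 := by
  simp only [Finset.prod_eq_zero_iff, CharTwo.add_eq_zero]

theorem stmt11_general (K : Finset ι) (a : ι → ZMod 2) :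
    F K a = 1 ↔ ∃ i ∈ K, a i = 1 := by
  rw [← CharTwo.add_eq_zero, F_add_one, Finset.prod_add_one_eq_zero_iff_of_charTwo]

theorem stmt11 (K : Finset ι) (hK : K.Nonempty) (a : ι → ZMod 2) :
    F K a = 1 ↔ ∃ i ∈ K, a i = 1 :=
  stmt11_general K a
end
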